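/- arXiv:2306.10947 — 6 statements merged into one kernel-verified Lean document; each statement's English description precedes it below -/
import Mathlib

section
/- If ℓ is not ν-almost-everywhere equal to a constant, then J(λ) tends to +∞ as λ → ∞. -/
open MeasureTheory Filter Topology

/-! Since `ℓ` is not a.e. constant, it lies below some level `s` strictly smaller than its mean `m`
with positive probability `p`. The Chernoff bound `p ≤ e^{λs} ∫ e^{-λℓ} dν` then gives
`J(λ) ≥ log p + λ (m - s)`. -/

section

open ProbabilityTheory Real

variable {Ω : Type*} [MeasurableSpace Ω] {μ : Measure Ω} [IsProbabilityMeasure μ] {X : Ω → ℝ}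

lemma measure_setOf_lt_integral_ne_zero (hX : Integrable X μ)
    (hconst : ¬ ∃ c : ℝ, ∀ᵐ ω ∂μ, X ω = c) : μ {ω | X ω < μ[X]} ≠ 0 := by
  intro hnull
  have hge : (fun _ ↦ μ[X]) ≤ᵐ[μ] X := by
    filter_upwards [measure_eq_zero_iff_ae_notMem.mp hnull] with ω hω
    exact not_lt.mp hω
  refine hconst ⟨μ[X], ((integral_eq_iff_of_ae_le (integrable_const _) hX hge).mp ?_).symm⟩
  simp

lemma exists_lt_integral_measureReal_setOf_le_pos (hX : Integrable X μ)
    (hconst : ¬ ∃ c : ℝ, ∀ᵐ ω ∂μ, X ω = c) :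
    ∃ s < μ[X], 0 < μ.real {ω | X ω ≤ s} := by
  have hcover : {ω | X ω < μ[X]} ⊆ ⋃ n : ℕ, {ω | X ω ≤ μ[X] - 1 / (n + 1)} := by
    intro ω hω
    obtain ⟨n, hn⟩ := exists_nat_one_div_lt (sub_pos.mpr (show X ω < μ[X] from hω))
    exact Set.mem_iUnion.mpr ⟨n, show X ω ≤ _ by linarith⟩
  obtain ⟨n, hn⟩ : ∃ n : ℕ, μ {ω | X ω ≤ μ[X] - 1 / (n + 1)} ≠ 0 := by
    by_contra! h
    exact measure_setOf_lt_integral_ne_zero hX hconst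
      (measure_mono_null hcover (measure_iUnion_null h))
  exact ⟨_, sub_lt_self _ Nat.one_div_pos_of_nat,
    ENNReal.toReal_pos hn (measure_ne_top μ _)⟩

theorem tendsto_cgf_sub_mul_integral_atBot (hX : Integrable X μ)
    (hexp : ∀ t ≤ 0, Integrable (fun ω ↦ exp (t * X ω)) μ)
    (hconst : ¬ ∃ c : ℝ, ∀ᵐ ω ∂μ, X ω = c) :
    Tendsto (fun t ↦ cgf X μ t - t * μ[X]) atBot atTop := by
  obtain ⟨s, hs, hpos⟩ := exists_lt_integral_measureReal_setOf_le_pos hX hconst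
  have hlower : ∀ t ≤ 0, log (μ.real {ω | X ω ≤ s}) + t * (s - μ[X]) ≤ cgf X μ t - t * μ[X] := by
    intro t ht
    have := (log_le_iff_le_exp hpos).mpr (measure_le_le_exp_cgf s ht (hexp t ht))
    linarith
  refine tendsto_atTop_mono' atBot ?_ <|
    tendsto_atTop_add_const_left _ (log (μ.real {ω | X ω ≤ s})) <|
    tendsto_id.atBot_mul_const_of_neg (sub_neg.mpr hs)
  exact (eventually_le_atBot 0).mono hlower

end

theorem jensen_gap_tendsto_atTop_general
    {Ω : Type*} [MeasurableSpace Ω] (ν : Measure Ω) [IsProbabilityMeasure ν]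
    (ℓ : Ω → ℝ) (hmeas : Measurable ℓ)
    (C : ℝ) (hbound : ∀ᵐ ω ∂ν, 0 ≤ ℓ ω ∧ ℓ ω ≤ C)
    (J : ℝ → ℝ)
    (hJ : ∀ lam : ℝ,
      J lam = Real.log (∫ ω, Real.exp (-lam * ℓ ω) ∂ν) + lam * ∫ ω, ℓ ω ∂ν)
    (hnonconst : ¬ ∃ c : ℝ, ∀ᵐ ω ∂ν, ℓ ω = c) :
    Tendsto J atTop atTop := by
  have hJ_cgf : J = fun lam ↦ ProbabilityTheory.cgf ℓ ν (-lam) - (-lam) * ∫ ω, ℓ ω ∂ν := by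
    funext lam
    simp [hJ, ProbabilityTheory.cgf, ProbabilityTheory.mgf]
  rw [hJ_cgf]
  have hexp : ∀ t ≤ 0, Integrable (fun ω ↦ Real.exp (t * ℓ ω)) ν := fun _ _ ↦
    ProbabilityTheory.integrable_exp_mul_of_mem_Icc hmeas.aemeasurable hbound
  exact (tendsto_cgf_sub_mul_integral_atBot (.of_mem_Icc 0 C hmeas.aemeasurable hbound) hexp
    hnonconst).comp tendsto_neg_atTop_atBot

/-- If `ℓ` is not `ν`-almost-everywhere constant, then `J(λ) → ∞` as `λ → ∞`. -/
theorem jensen_gap_tendsto_atTop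
    {Ω : Type*} [MeasurableSpace Ω] (ν : Measure Ω) [IsProbabilityMeasure ν]
    (ℓ : Ω → ℝ) (hmeas : Measurable ℓ)
    (C : ℝ) (hC : 0 < C) (hbound : ∀ᵐ ω ∂ν, 0 ≤ ℓ ω ∧ ℓ ω ≤ C)
    (J : ℝ → ℝ)
    (hJ : ∀ lam : ℝ,
      J lam = Real.log (∫ ω, Real.exp (-lam * ℓ ω) ∂ν) + lam * ∫ ω, ℓ ω ∂ν)
    (hnonconst : ¬ ∃ c : ℝ, ∀ᵐ ω ∂ν, ℓ ω = c) :
    Tendsto J atTop atTop :=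
  jensen_gap_tendsto_atTop_general ν ℓ hmeas C hbound J hJ hnonconst
end

section
/- Let m = essInf ℓ. Then (1/λ)·log ∫ exp(−λ·ℓ) dν converges to −m as λ → ∞; equivalently, J(λ)/λ converges to (∫ ℓ dν) − m as λ → ∞. -/
open MeasureTheory Filter Topology

/-!
Write `Λ(t) = log ∫ exp (t ℓ) dν` for the cumulant generating function and `m = essInf ℓ`.
Since `ℓ ≥ m` a.e., `Λ(-λ) ≤ -λ m`. Conversely, for every `a > m` the set `{ℓ ≤ a}` has
positive mass `p`, and Chernoff's bound gives `Λ(-λ) ≥ -λ a + log p`. Dividing by `λ` and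
letting `λ → ∞` squeezes `Λ(-λ)/λ` to `-m`; adding `∫ ℓ dν` gives the statement about `J`.
-/

lemma MeasureTheory.measure_le_pos_of_essInf_lt {α β : Type*} [MeasurableSpace α]
    {μ : Measure α} [ConditionallyCompleteLinearOrder β] {f : α → β} {a : β}
    (hf : IsCoboundedUnder (· ≥ ·) (ae μ) f) (h : essInf f μ < a) :
    0 < μ {x | f x ≤ a} := by
  refine pos_iff_ne_zero.2 fun hzero => h.not_ge (le_essInf_of_ae_le a ?_ hf)
  filter_upwards [measure_eq_zero_iff_ae_notMem.1 hzero] with x hx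
  exact (not_le.1 hx).le

namespace ProbabilityTheory

variable {Ω : Type*} [MeasurableSpace Ω] {μ : Measure Ω} {X : Ω → ℝ} {t : ℝ}

lemma integrable_exp_mul_of_nonpos_of_le [IsFiniteMeasure μ] (b : ℝ) (ht : t ≤ 0)
    (hX : AEMeasurable X μ) (hb : ∀ᵐ ω ∂μ, b ≤ X ω) :
    Integrable (fun ω ↦ Real.exp (t * X ω)) μ := by
  refine .of_mem_Icc 0 (Real.exp (t * b)) (Real.measurable_exp.comp_aemeasurable
    (hX.const_mul t)) ?_
  filter_upwards [hb] with ω hω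
  exact ⟨(Real.exp_pos _).le, Real.exp_le_exp.2 (mul_le_mul_of_nonpos_left hω ht)⟩

lemma cgf_le_mul_of_nonpos_of_le [IsProbabilityMeasure μ] (c : ℝ) (ht : t ≤ 0)
    (hc : ∀ᵐ ω ∂μ, c ≤ X ω) (hint : Integrable (fun ω ↦ Real.exp (t * X ω)) μ) :
    cgf X μ t ≤ t * c := by
  have hmgf : mgf X μ t ≤ Real.exp (t * c) := by
    simpa only [mgf_const] using mgf_anti_of_nonpos (Y := X) hc ht (integrable_const _)
  calc cgf X μ t ≤ Real.log (Real.exp (t * c)) := Real.log_le_log (mgf_pos hint) hmgf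
    _ = t * c := Real.log_exp _

lemma mul_add_log_measureReal_le_cgf [IsFiniteMeasure μ] (a : ℝ) (ht : t ≤ 0)
    (hint : Integrable (fun ω ↦ Real.exp (t * X ω)) μ) (hpos : 0 < μ.real {ω | X ω ≤ a}) :
    t * a + Real.log (μ.real {ω | X ω ≤ a}) ≤ cgf X μ t := by
  have hchernoff := measure_le_le_exp_mul_mgf a ht hint
  have hmgf : 0 < mgf X μ t :=
    pos_of_mul_pos_right (hpos.trans_le hchernoff) (Real.exp_pos _).le
  calc t * a + Real.log (μ.real {ω | X ω ≤ a})
      ≤ t * a + Real.log (Real.exp (-t * a) * mgf X μ t) := by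
        gcongr
    _ = cgf X μ t := by
        rw [Real.log_mul (Real.exp_pos _).ne' hmgf.ne', Real.log_exp, cgf]
        ring

theorem tendsto_cgf_neg_div_atTop [IsProbabilityMeasure μ] (hX : AEMeasurable X μ)
    (hbdd : IsBoundedUnder (· ≥ ·) (ae μ) X) (hcobdd : IsCoboundedUnder (· ≥ ·) (ae μ) X) :
    Tendsto (fun t ↦ cgf X μ (-t) / t) atTop (𝓝 (-essInf X μ)) := by
  obtain ⟨b, hb⟩ := hbdd
  have hint : ∀ t, 0 ≤ t → Integrable (fun ω ↦ Real.exp (-t * X ω)) μ := fun t ht ↦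
    integrable_exp_mul_of_nonpos_of_le b (neg_nonpos.2 ht) hX hb
  rw [tendsto_order]
  constructor
  · intro c hc
    obtain ⟨a, hXa, hac⟩ := exists_between (lt_neg_of_lt_neg hc)
    have hpos : 0 < μ.real {ω | X ω ≤ a} :=
      ENNReal.toReal_pos (measure_le_pos_of_essInf_lt hcobdd hXa).ne' (measure_ne_top _ _)
    have hlower : Tendsto (fun t ↦ -a + Real.log (μ.real {ω | X ω ≤ a}) / t) atTop
        (𝓝 (-a + 0)) :=
      tendsto_const_nhds.add (tendsto_const_nhds.div_atTop tendsto_id)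
    filter_upwards [hlower.eventually (eventually_gt_nhds (by simpa using lt_neg_of_lt_neg hac)),
      eventually_gt_atTop 0] with t hct ht
    refine hct.trans_le ?_
    have hcgf := mul_add_log_measureReal_le_cgf a (neg_nonpos.2 ht.le) (hint t ht.le) hpos
    rw [le_div_iff₀ ht, add_mul, div_mul_cancel₀ _ ht.ne']
    linarith
  · intro c hc
    filter_upwards [eventually_gt_atTop 0] with t ht
    refine lt_of_le_of_lt ?_ hc
    have hcgf := cgf_le_mul_of_nonpos_of_le _ (neg_nonpos.2 ht.le) (ae_essInf_le ⟨b, hb⟩)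
      (hint t ht.le)
    rw [div_le_iff₀ ht]
    linarith

end ProbabilityTheory

theorem jensen_gap_div_lambda_tendsto_general
    {Ω : Type*} [MeasurableSpace Ω] (ν : Measure Ω) [IsProbabilityMeasure ν]
    (ℓ : Ω → ℝ) (hmeas : Measurable ℓ)
    (C : ℝ) (hbound : ∀ᵐ ω ∂ν, 0 ≤ ℓ ω ∧ ℓ ω ≤ C)
    (J : ℝ → ℝ)
    (hJ : ∀ lam : ℝ,
      J lam = Real.log (∫ ω, Real.exp (-lam * ℓ ω) ∂ν) + lam * ∫ ω, ℓ ω ∂ν)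
    (m : ℝ) (hm : m = essInf ℓ ν) :
    Tendsto (fun lam => (1 / lam) * Real.log (∫ ω, Real.exp (-lam * ℓ ω) ∂ν))
        atTop (𝓝 (-m)) ∧
    Tendsto (fun lam => J lam / lam) atTop (𝓝 ((∫ ω, ℓ ω ∂ν) - m)) := by
  have hlog : Tendsto (fun lam => (1 / lam) * Real.log (∫ ω, Real.exp (-lam * ℓ ω) ∂ν))
      atTop (𝓝 (-m)) := by
    rw [hm]
    have hcobdd : IsCoboundedUnder (· ≥ ·) (ae ν) ℓ :=
      isCoboundedUnder_ge_of_eventually_le _ (hbound.mono fun _ h ↦ h.2)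
    exact (ProbabilityTheory.tendsto_cgf_neg_div_atTop hmeas.aemeasurable
      ⟨0, hbound.mono fun _ h ↦ h.1⟩ hcobdd).congr fun t ↦ (one_div_mul_eq_div t _).symm
  refine ⟨hlog, ?_⟩
  rw [← neg_add_eq_sub]
  refine (hlog.add_const _).congr' ?_
  filter_upwards [eventually_ne_atTop 0] with lam hlam
  rw [hJ]
  field_simp

/-- With `m = essInf ℓ`, the quantity `(1/λ)·log ∫ exp(−λℓ) dν` converges to `−m` as
`λ → ∞`; equivalently, `J(λ)/λ` converges to `(∫ ℓ dν) − m`. -/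
theorem jensen_gap_div_lambda_tendsto
    {Ω : Type*} [MeasurableSpace Ω] (ν : Measure Ω) [IsProbabilityMeasure ν]
    (ℓ : Ω → ℝ) (hmeas : Measurable ℓ)
    (C : ℝ) (hC : 0 < C) (hbound : ∀ᵐ ω ∂ν, 0 ≤ ℓ ω ∧ ℓ ω ≤ C)
    (J : ℝ → ℝ)
    (hJ : ∀ lam : ℝ,
      J lam = Real.log (∫ ω, Real.exp (-lam * ℓ ω) ∂ν) + lam * ∫ ω, ℓ ω ∂ν)
    (m : ℝ) (hm : m = essInf ℓ ν) :
    Tendsto (fun lam => (1 / lam) * Real.log (∫ ω, Real.exp (-lam * ℓ ω) ∂ν))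
        atTop (𝓝 (-m)) ∧
    Tendsto (fun lam => J lam / lam) atTop (𝓝 ((∫ ω, ℓ ω ∂ν) - m)) :=
  jensen_gap_div_lambda_tendsto_general ν ℓ hmeas C hbound J hJ m hm
end

section
/- Suppose ν(ℓ = m) > 0, where m = essInf ℓ. Then log ∫ exp(−λ·ℓ) dν + λ·m converges to log ν(ℓ = m) as λ → ∞; equivalently, ∫ exp(−λ·(ℓ − m)) dν → ν(ℓ = m) > 0 as λ → ∞. -/
open MeasureTheory Filter Topology

/-!
Since `m ≤ ℓ` almost everywhere, the integrands `exp (-λ (ℓ - m))` lie in `[0, 1]` and converge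
pointwise to the indicator of `{ℓ = m}`, so dominated convergence gives
`∫ exp (-λ (ℓ - m)) dν → ν {ℓ = m} > 0`. Pulling the constant `exp (λ m)` out of the integral and
taking logarithms gives the first limit.
-/

lemma tendsto_exp_neg_mul_sub_atTop {m x : ℝ} (hx : m ≤ x) :
    Tendsto (fun lam => Real.exp (-lam * (x - m))) atTop (𝓝 (({m} : Set ℝ).indicator 1 x)) := by
  rcases hx.eq_or_lt with rfl | hlt
  · simp
  · rw [Set.indicator_of_notMem (Set.mem_singleton_iff.not.2 hlt.ne')]
    refine Real.tendsto_exp_atBot.comp ((tendsto_id.atTop_mul_const_of_neg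
      (sub_neg.2 hlt)).congr fun lam => ?_)
    simp only [id]
    ring

lemma tendsto_integral_exp_neg_mul_sub {Ω : Type*} [MeasurableSpace Ω] {ν : Measure Ω}
    [IsFiniteMeasure ν] {ℓ : Ω → ℝ} (hℓ : Measurable ℓ) {m : ℝ} (hm : ∀ᵐ ω ∂ν, m ≤ ℓ ω) :
    Tendsto (fun lam => ∫ ω, Real.exp (-lam * (ℓ ω - m)) ∂ν) atTop
      (𝓝 (ν.real {ω | ℓ ω = m})) := by
  have hS : MeasurableSet {ω | ℓ ω = m} := hℓ (measurableSet_singleton m)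
  rw [← integral_indicator_one hS]
  refine tendsto_integral_filter_of_dominated_convergence (fun _ => 1)
    (Eventually.of_forall fun lam =>
      ((hℓ.sub_const m).const_mul (-lam)).exp.aestronglyMeasurable) ?_ (integrable_const 1)
    (hm.mono fun ω hω => tendsto_exp_neg_mul_sub_atTop hω)
  filter_upwards [eventually_ge_atTop 0] with lam hlam
  filter_upwards [hm] with ω hω
  rw [Real.norm_of_nonneg (Real.exp_nonneg _), Real.exp_le_one_iff]
  nlinarith

lemma log_integral_exp_neg_mul_sub {Ω : Type*} [MeasurableSpace Ω] {ν : Measure Ω}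
    {ℓ : Ω → ℝ} {m lam : ℝ} (hne : ∫ ω, Real.exp (-lam * (ℓ ω - m)) ∂ν ≠ 0) :
    Real.log (∫ ω, Real.exp (-lam * (ℓ ω - m)) ∂ν)
      = Real.log (∫ ω, Real.exp (-lam * ℓ ω) ∂ν) + lam * m := by
  have hsplit : ∫ ω, Real.exp (-lam * (ℓ ω - m)) ∂ν
      = Real.exp (lam * m) * ∫ ω, Real.exp (-lam * ℓ ω) ∂ν := by
    rw [← integral_const_mul]
    congr 1 with ω
    rw [← Real.exp_add]
    ring_nf
  rw [hsplit] at hne ⊢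
  rw [Real.log_mul (Real.exp_ne_zero _) (right_ne_zero_of_mul hne), Real.log_exp, add_comm]

theorem log_integral_exp_add_tendsto_general
    {Ω : Type*} [MeasurableSpace Ω] (ν : Measure Ω) [IsProbabilityMeasure ν]
    (ℓ : Ω → ℝ) (hmeas : Measurable ℓ)
    (C : ℝ) (hbound : ∀ᵐ ω ∂ν, 0 ≤ ℓ ω ∧ ℓ ω ≤ C)
    (m : ℝ) (hm : m = essInf ℓ ν)
    (hmass : 0 < ν {ω | ℓ ω = m}) :
    Tendsto (fun lam => Real.log (∫ ω, Real.exp (-lam * ℓ ω) ∂ν) + lam * m)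
        atTop (𝓝 (Real.log ((ν {ω | ℓ ω = m}).toReal))) ∧
    Tendsto (fun lam => ∫ ω, Real.exp (-lam * (ℓ ω - m)) ∂ν)
        atTop (𝓝 ((ν {ω | ℓ ω = m}).toReal)) ∧
    0 < (ν {ω | ℓ ω = m}).toReal := by
  have hge : ∀ᵐ ω ∂ν, m ≤ ℓ ω :=
    hm ▸ ae_essInf_le ⟨0, eventually_map.2 (hbound.mono fun _ hω => hω.1)⟩
  have hlim := tendsto_integral_exp_neg_mul_sub hmeas hge
  have hpos : 0 < ν.real {ω | ℓ ω = m} := ENNReal.toReal_pos hmass.ne' (measure_ne_top _ _)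
  refine ⟨?_, hlim, hpos⟩
  refine ((Real.continuousAt_log hpos.ne').tendsto.comp hlim).congr' ?_
  filter_upwards [hlim.eventually_ne hpos.ne'] with lam hne
  exact log_integral_exp_neg_mul_sub hne

/-- If `ν(ℓ = m) > 0` where `m = essInf ℓ`, then
`log ∫ exp(−λℓ) dν + λ·m → log ν(ℓ = m)` as `λ → ∞`; equivalently,
`∫ exp(−λ(ℓ − m)) dν → ν(ℓ = m)`. -/
theorem log_integral_exp_add_tendsto
    {Ω : Type*} [MeasurableSpace Ω] (ν : Measure Ω) [IsProbabilityMeasure ν]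
    (ℓ : Ω → ℝ) (hmeas : Measurable ℓ)
    (C : ℝ) (hC : 0 < C) (hbound : ∀ᵐ ω ∂ν, 0 ≤ ℓ ω ∧ ℓ ω ≤ C)
    (m : ℝ) (hm : m = essInf ℓ ν)
    (hmass : 0 < ν {ω | ℓ ω = m}) :
    Tendsto (fun lam => Real.log (∫ ω, Real.exp (-lam * ℓ ω) ∂ν) + lam * m)
        atTop (𝓝 (Real.log ((ν {ω | ℓ ω = m}).toReal))) ∧
    Tendsto (fun lam => ∫ ω, Real.exp (-lam * (ℓ ω - m)) ∂ν)
        atTop (𝓝 ((ν {ω | ℓ ω = m}).toReal)) ∧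
    0 < (ν {ω | ℓ ω = m}).toReal :=
  log_integral_exp_add_tendsto_general ν ℓ hmeas C hbound m hm hmass
end

section
/- Suppose ν(ℓ = m) > 0, where m = essInf ℓ. Then λ·J′(λ) − J(λ) converges to −log ν(ℓ = m) as λ → ∞, where J′(λ) = ∫ ℓ dν − (∫ ℓ·exp(−λ·ℓ) dν)/(∫ exp(−λ·ℓ) dν) is the derivative of J. Moreover λ·J′(λ) − J(λ) → 0 as λ → 0⁺. -/
/-!
With `K = cgf ℓ ν` we have `J(λ) = K(-λ) + λ ∫ ℓ dν`, so `λ J'(λ) - J(λ) = s K'(s) - K(s)` at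
`s = -λ`. This quantity is continuous at `s = 0`, where it vanishes. It does not change when `ℓ`
is shifted by a constant, so we may replace `ℓ` by `ℓ - m ≥ 0`, with `ν(ℓ - m = 0) > 0`. Then,
as `s → -∞`, dominated convergence gives `mgf(s) = ∫ e^{sℓ} dν → ν(ℓ = 0)` and
`s · mgf'(s) = ∫ sℓ e^{sℓ} dν → 0`, the latter because `u e^u` is bounded on `u ≤ 0`.
-/

open MeasureTheory Filter Topology ProbabilityTheory Real

section

variable {Ω : Type*} {mΩ : MeasurableSpace Ω} {μ : Measure Ω} {X : Ω → ℝ}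

/-- `K^*(K'(s))` for `K = cgf X μ` and its Legendre transform `K^*`: the relative entropy of the
tilted measure `μ.tilted (s * X ·)` with respect to `μ`. -/
noncomputable def legendreCgf (X : Ω → ℝ) (μ : Measure Ω) (s : ℝ) : ℝ :=
  s * deriv (cgf X μ) s - cgf X μ s

lemma interior_integrableExpSet_eq_univ (h : ∀ t, Integrable (fun ω ↦ exp (t * X ω)) μ) :
    interior (integrableExpSet X μ) = Set.univ := by
  rw [Set.eq_univ_of_forall (s := integrableExpSet X μ) h, interior_univ]

lemma Iio_subset_interior_integrableExpSet [IsFiniteMeasure μ] (hX : AEMeasurable X μ)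
    (h0 : ∀ᵐ ω ∂μ, 0 ≤ X ω) : Set.Iio 0 ⊆ interior (integrableExpSet X μ) := by
  rw [← interior_Iic]
  refine interior_mono fun t (ht : t ≤ 0) ↦
    Integrable.of_mem_Icc 0 1 (measurable_exp.comp_aemeasurable (hX.const_mul t)) ?_
  filter_upwards [h0] with ω hω
  exact ⟨(exp_pos _).le, exp_le_one_iff.2 (mul_nonpos_of_nonpos_of_nonneg ht hω)⟩

lemma cgf_add_const [NeZero μ] {t : ℝ} (h : Integrable (fun ω ↦ exp (t * X ω)) μ) (c : ℝ) :
    cgf (fun ω ↦ X ω + c) μ t = cgf X μ t + t * c := by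
  rw [cgf, mgf_add_const, log_mul (mgf_pos_iff.2 h).ne' (exp_pos _).ne', log_exp, cgf]

lemma legendreCgf_add_const [NeZero μ] (h : ∀ t, Integrable (fun ω ↦ exp (t * X ω)) μ)
    (c : ℝ) : legendreCgf (fun ω ↦ X ω + c) μ = legendreCgf X μ := by
  have hK : cgf (fun ω ↦ X ω + c) μ = fun t ↦ cgf X μ t + t * c :=
    funext fun t ↦ cgf_add_const (h t) c
  ext s
  have hdiff : DifferentiableAt ℝ (cgf X μ) s :=
    (analyticAt_cgf (by simp [interior_integrableExpSet_eq_univ h])).differentiableAt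
  have hderiv : HasDerivAt (fun t ↦ cgf X μ t + t * c) (deriv (cgf X μ) s + c) s :=
    hdiff.hasDerivAt.add (hasDerivAt_mul_const c)
  rw [legendreCgf, legendreCgf, hK, hderiv.deriv]
  ring

lemma tendsto_legendreCgf_zero [IsProbabilityMeasure μ]
    (h : 0 ∈ interior (integrableExpSet X μ)) : Tendsto (legendreCgf X μ) (𝓝 0) (𝓝 0) := by
  have hcont : ContinuousAt (legendreCgf X μ) 0 :=
    (continuousAt_id.mul (analyticAt_cgf h).deriv.continuousAt).sub
      (analyticAt_cgf h).continuousAt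
  simpa [legendreCgf, cgf_zero] using hcont.tendsto

lemma tendsto_exp_mul_atBot_of_pos {x : ℝ} (hx : 0 < x) :
    Tendsto (fun s ↦ exp (s * x)) atBot (𝓝 0) :=
  tendsto_exp_atBot.comp (tendsto_id.atBot_mul_const hx)

lemma tendsto_mul_exp_atBot : Tendsto (fun u ↦ u * exp u) atBot (𝓝 0) := by
  simpa using ((tendsto_pow_mul_exp_neg_atTop_nhds_zero 1).comp tendsto_neg_atBot_atTop).neg

lemma abs_mul_exp_le_of_nonpos {u : ℝ} (hu : u ≤ 0) : |u * exp u| ≤ exp (-1) := by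
  rw [abs_of_nonpos (mul_nonpos_of_nonpos_of_nonneg hu (exp_pos u).le)]
  simpa using mul_exp_neg_le_exp_neg_one (-u)

lemma tendsto_mgf_atBot [IsFiniteMeasure μ] (hX : Measurable X) (h0 : ∀ᵐ ω ∂μ, 0 ≤ X ω) :
    Tendsto (mgf X μ) atBot (𝓝 (μ.real {ω | X ω = 0})) := by
  rw [← integral_indicator_one (measurableSet_eq_fun hX measurable_const)]
  refine tendsto_integral_filter_of_dominated_convergence (fun _ ↦ 1)
    (.of_forall fun s ↦ aemeasurable_exp_mul s hX.aemeasurable) ?_ (integrable_const 1) ?_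
  · filter_upwards [eventually_le_atBot 0] with s hs
    filter_upwards [h0] with ω hω
    rw [norm_of_nonneg (exp_pos _).le]
    exact exp_le_one_iff.2 (mul_nonpos_of_nonpos_of_nonneg hs hω)
  · filter_upwards [h0] with ω hω
    rcases hω.eq_or_lt with hω | hω
    · simp [← hω]
    · simpa [hω.ne'] using tendsto_exp_mul_atBot_of_pos hω

lemma tendsto_integral_mul_mul_exp_atBot [IsFiniteMeasure μ] (hX : Measurable X)
    (h0 : ∀ᵐ ω ∂μ, 0 ≤ X ω) :
    Tendsto (fun s ↦ ∫ ω, s * X ω * exp (s * X ω) ∂μ) atBot (𝓝 0) := by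
  have hlim := tendsto_integral_filter_of_dominated_convergence (μ := μ) (l := atBot)
    (F := fun s ω ↦ s * X ω * exp (s * X ω)) (f := 0) (fun _ ↦ exp (-1))
    (.of_forall fun s ↦ by fun_prop) ?_ (integrable_const _) ?_
  · simpa using hlim
  · filter_upwards [eventually_le_atBot 0] with s hs
    filter_upwards [h0] with ω hω
    exact abs_mul_exp_le_of_nonpos (mul_nonpos_of_nonpos_of_nonneg hs hω)
  · filter_upwards [h0] with ω hω
    rcases hω.eq_or_lt with hω | hω
    · simp [← hω]
    · exact tendsto_mul_exp_atBot.comp (tendsto_id.atBot_mul_const hω)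

lemma tendsto_legendreCgf_atBot [IsFiniteMeasure μ] (hX : Measurable X)
    (h0 : ∀ᵐ ω ∂μ, 0 ≤ X ω) (hmass : 0 < μ {ω | X ω = 0}) :
    Tendsto (legendreCgf X μ) atBot (𝓝 (-log (μ.real {ω | X ω = 0}))) := by
  have hp : μ.real {ω | X ω = 0} ≠ 0 := (ENNReal.toReal_pos hmass.ne' (measure_ne_top _ _)).ne'
  have heq : (fun s ↦ (∫ ω, s * X ω * exp (s * X ω) ∂μ) / mgf X μ s - log (mgf X μ s))
      =ᶠ[atBot] legendreCgf X μ := by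
    filter_upwards [eventually_lt_atBot 0] with s hs
    rw [legendreCgf, cgf, deriv_cgf (Iio_subset_interior_integrableExpSet hX.aemeasurable h0 hs),
      ← mul_div_assoc, ← integral_const_mul]
    simp only [mul_assoc]
  refine Tendsto.congr' heq ?_
  simpa using ((tendsto_integral_mul_mul_exp_atBot hX h0).div (tendsto_mgf_atBot hX h0) hp).sub
    ((continuousAt_log hp).tendsto.comp (tendsto_mgf_atBot hX h0))

end

theorem legendre_term_tendsto_general
    {Ω : Type*} [MeasurableSpace Ω] (ν : Measure Ω) [IsProbabilityMeasure ν]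
    (ℓ : Ω → ℝ) (hmeas : Measurable ℓ)
    (C : ℝ) (hbound : ∀ᵐ ω ∂ν, 0 ≤ ℓ ω ∧ ℓ ω ≤ C)
    (J : ℝ → ℝ)
    (hJ : ∀ lam : ℝ,
      J lam = Real.log (∫ ω, Real.exp (-lam * ℓ ω) ∂ν) + lam * ∫ ω, ℓ ω ∂ν)
    (m : ℝ) (hm : m = essInf ℓ ν)
    (hmass : 0 < ν {ω | ℓ ω = m}) :
    Tendsto (fun lam =>
        lam * ((∫ ω, ℓ ω ∂ν) -
            (∫ ω, ℓ ω * Real.exp (-lam * ℓ ω) ∂ν) / (∫ ω, Real.exp (-lam * ℓ ω) ∂ν))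
          - J lam)
      atTop (𝓝 (-Real.log ((ν {ω | ℓ ω = m}).toReal))) ∧
    Tendsto (fun lam =>
        lam * ((∫ ω, ℓ ω ∂ν) -
            (∫ ω, ℓ ω * Real.exp (-lam * ℓ ω) ∂ν) / (∫ ω, Real.exp (-lam * ℓ ω) ∂ν))
          - J lam)
      (𝓝[>] (0 : ℝ)) (𝓝 0) := by
  have hint : ∀ t, Integrable (fun ω ↦ exp (t * ℓ ω)) ν := fun t ↦
    integrable_exp_mul_of_mem_Icc hmeas.aemeasurable hbound
  have hinterior : interior (integrableExpSet ℓ ν) = Set.univ :=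
    interior_integrableExpSet_eq_univ hint
  have hterm : ∀ lam, lam * ((∫ ω, ℓ ω ∂ν) -
      (∫ ω, ℓ ω * exp (-lam * ℓ ω) ∂ν) / (∫ ω, exp (-lam * ℓ ω) ∂ν)) - J lam
        = legendreCgf ℓ ν (-lam) := fun lam ↦ by
    rw [hJ, legendreCgf, deriv_cgf (hinterior ▸ trivial), cgf, mgf]
    ring
  simp only [hterm]
  refine ⟨?_, ?_⟩
  · have h0 : ∀ᵐ ω ∂ν, 0 ≤ ℓ ω - m := by
      filter_upwards [hm ▸ ae_essInf_le ⟨0, eventually_map.2 (hbound.mono fun _ h ↦ h.1)⟩]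
        with ω hω using sub_nonneg.2 hω
    have hint' : ∀ t, Integrable (fun ω ↦ exp (t * (ℓ ω - m))) ν := fun t ↦
      integrable_exp_mul_of_mem_Icc (hmeas.sub_const m).aemeasurable (a := -m) (b := C - m)
        (hbound.mono fun _ h ↦ ⟨by linarith [h.1], by linarith [h.2]⟩)
    have hshift : legendreCgf ℓ ν = legendreCgf (fun ω ↦ ℓ ω - m) ν := by
      simpa using legendreCgf_add_const hint' m
    have hset : {ω | ℓ ω - m = 0} = {ω | ℓ ω = m} := by simp only [sub_eq_zero]
    have hlim := tendsto_legendreCgf_atBot (hmeas.sub_const m) h0 (hset ▸ hmass)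
    rw [hset] at hlim
    exact hshift ▸ hlim.comp tendsto_neg_atTop_atBot
  · have hneg : Tendsto (fun lam : ℝ ↦ -lam) (𝓝[>] 0) (𝓝 0) := by
      simpa using (tendsto_neg (0 : ℝ)).mono_left nhdsWithin_le_nhds
    exact (tendsto_legendreCgf_zero (hinterior ▸ trivial)).comp hneg

/-- If `ν(ℓ = m) > 0` where `m = essInf ℓ`, then `λ·J′(λ) − J(λ) → −log ν(ℓ = m)` as
`λ → ∞`, where `J′(λ) = ∫ ℓ dν − (∫ ℓ·exp(−λℓ) dν)/(∫ exp(−λℓ) dν)`; moreover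
`λ·J′(λ) − J(λ) → 0` as `λ → 0⁺`. -/
theorem legendre_term_tendsto
    {Ω : Type*} [MeasurableSpace Ω] (ν : Measure Ω) [IsProbabilityMeasure ν]
    (ℓ : Ω → ℝ) (hmeas : Measurable ℓ)
    (C : ℝ) (hC : 0 < C) (hbound : ∀ᵐ ω ∂ν, 0 ≤ ℓ ω ∧ ℓ ω ≤ C)
    (J : ℝ → ℝ)
    (hJ : ∀ lam : ℝ,
      J lam = Real.log (∫ ω, Real.exp (-lam * ℓ ω) ∂ν) + lam * ∫ ω, ℓ ω ∂ν)
    (m : ℝ) (hm : m = essInf ℓ ν)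
    (hmass : 0 < ν {ω | ℓ ω = m}) :
    Tendsto (fun lam =>
        lam * ((∫ ω, ℓ ω ∂ν) -
            (∫ ω, ℓ ω * Real.exp (-lam * ℓ ω) ∂ν) / (∫ ω, Real.exp (-lam * ℓ ω) ∂ν))
          - J lam)
      atTop (𝓝 (-Real.log ((ν {ω | ℓ ω = m}).toReal))) ∧
    Tendsto (fun lam =>
        lam * ((∫ ω, ℓ ω ∂ν) -
            (∫ ω, ℓ ω * Real.exp (-lam * ℓ ω) ∂ν) / (∫ ω, Real.exp (-lam * ℓ ω) ∂ν))
          - J lam)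
      (𝓝[>] (0 : ℝ)) (𝓝 0) :=
  legendre_term_tendsto_general ν ℓ hmeas C hbound J hJ m hm hmass
end

section
/- Suppose ν(ℓ = m) > 0, where m = essInf ℓ, and let s be a real number with 0 < s < −log ν(ℓ = m). Then the infimum over λ > 0 of (J(λ) + s)/λ is attained: there exists a finite λ⋆ > 0 such that (J(λ⋆) + s)/λ⋆ = inf_{λ > 0} (J(λ) + s)/λ. -/
/-! Write `p = ν(ℓ = m)` and `Λ(λ) = log ∫ exp (-λ (ℓ - m)) dν`, so that
`(J λ + s) / λ = (∫ ℓ dν - m) + (Λ(λ) + s) / λ`. Since `ℓ` is bounded, `Λ` is continuous with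
`Λ(0) = 0`, and since `ℓ ≥ m` almost everywhere, dominated convergence gives `Λ(λ) → log p < -s`
as `λ → ∞`. So `(Λ(λ) + s) / λ` tends to `+∞` as `λ → 0⁺`, tends to `0` as `λ → ∞`, and is negative
somewhere; a minimum over a large compact interval is then a minimum over all `λ > 0`. -/

open MeasureTheory Filter Topology Set ProbabilityTheory

theorem exists_isMinOn_Ioi_of_eventually_le {g : ℝ → ℝ} {a x₀ : ℝ} (hg : ContinuousOn g (Ioi a))
    (hx₀ : a < x₀) (hleft : ∀ᶠ x in 𝓝[>] a, g x₀ ≤ g x) (hright : ∀ᶠ x in atTop, g x₀ ≤ g x) :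
    ∃ x, a < x ∧ IsMinOn g (Ioi a) x := by
  obtain ⟨b, hab, hb⟩ := mem_nhdsGT_iff_exists_Ioo_subset.1 hleft
  obtain ⟨c, hc⟩ := eventually_atTop.1 hright
  have hK : Icc (min b x₀) (max c x₀) ⊆ Ioi a := fun y hy => lt_of_lt_of_le (lt_min hab hx₀) hy.1
  obtain ⟨x, hxK, hmin⟩ := isCompact_Icc.exists_isMinOn
    ⟨x₀, min_le_right _ _, le_max_right _ _⟩ (hg.mono hK)
  have hx_le : g x ≤ g x₀ := hmin ⟨min_le_right _ _, le_max_right _ _⟩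
  refine ⟨x, hK hxK, fun y (hy : a < y) => ?_⟩
  rcases lt_or_ge y (min b x₀) with hy_small | hy_large
  · exact hx_le.trans (hb ⟨hy, hy_small.trans_le (min_le_left _ _)⟩)
  rcases le_or_gt y (max c x₀) with hy_mid | hy_big
  · exact hmin ⟨hy_large, hy_mid⟩
  · exact hx_le.trans (hc y ((le_max_left _ _).trans hy_big.le))

theorem exists_isMinOn_div_Ioi {h : ℝ → ℝ} {L : ℝ} (hcont : ContinuousOn h (Ici 0))
    (h0 : 0 < h 0) (htop : Tendsto h atTop (𝓝 L)) (hL : L < 0) :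
    ∃ x, 0 < x ∧ IsMinOn (fun x => h x / x) (Ioi 0) x := by
  obtain ⟨x₀, hx₀_neg, hx₀⟩ := ((htop.eventually_lt_const hL).and (eventually_gt_atTop 0)).exists
  have hg₀ : h x₀ / x₀ < 0 := div_neg_of_neg_of_pos hx₀_neg hx₀
  refine exists_isMinOn_Ioi_of_eventually_le
    ((hcont.mono Ioi_subset_Ici_self).div continuousOn_id fun x hx => ne_of_gt hx) hx₀ ?_ ?_
  · have hnear : Tendsto h (𝓝[>] 0) (𝓝 (h 0)) :=
      (hcont.continuousWithinAt self_mem_Ici).mono_left (nhdsWithin_mono _ Ioi_subset_Ici_self)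
    simpa only [div_eq_mul_inv] using
      (hnear.pos_mul_atTop h0 tendsto_inv_nhdsGT_zero).eventually_ge_atTop (h x₀ / x₀)
  · exact ((htop.div_atTop tendsto_id).eventually_const_lt hg₀).mono fun _ => le_of_lt

namespace ProbabilityTheory

variable {Ω : Type*} [MeasurableSpace Ω] {μ : Measure Ω} {X : Ω → ℝ} {t : ℝ}

theorem cgf_add_const (α : ℝ) (h : mgf X μ t ≠ 0) :
    cgf (fun ω => X ω + α) μ t = cgf X μ t + t * α := by
  rw [cgf, mgf_add_const, Real.log_mul h (Real.exp_pos _).ne', Real.log_exp, cgf]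

theorem tendsto_mgf_atBot_of_nonneg [IsFiniteMeasure μ] (hX : AEMeasurable X μ)
    (h0 : ∀ᵐ ω ∂μ, 0 ≤ X ω) : Tendsto (mgf X μ) atBot (𝓝 (μ.real {ω | X ω = 0})) := by
  have hlim : ∫ ω, {ω | X ω = 0}.indicator 1 ω ∂μ = μ.real {ω | X ω = 0} := by
    simp [integral_indicator₀ (nullMeasurableSet_eq_fun hX aemeasurable_const)]
  rw [← hlim]
  refine tendsto_integral_filter_of_dominated_convergence (fun _ => 1)
    (Eventually.of_forall fun t => aemeasurable_exp_mul t hX) ?_ (integrable_const _) ?_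
  · filter_upwards [eventually_le_atBot 0] with t ht
    filter_upwards [h0] with ω hω
    rw [Real.norm_eq_abs, Real.abs_exp, Real.exp_le_one_iff]
    exact mul_nonpos_of_nonpos_of_nonneg ht hω
  · filter_upwards [h0] with ω hω
    rcases hω.eq_or_lt with hzero | hpos
    · simp [← hzero]
    · have hne : X ω ≠ 0 := hpos.ne'
      simp only [indicator, mem_ofPred_eq, hne, if_false]
      exact Real.tendsto_exp_atBot.comp (tendsto_id.atBot_mul_const hpos)

theorem continuous_cgf_of_mem_Icc [IsFiniteMeasure μ] [NeZero μ] {a b : ℝ}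
    (hX : AEMeasurable X μ) (hb : ∀ᵐ ω ∂μ, X ω ∈ Icc a b) : Continuous (cgf X μ) :=
  have hint (t : ℝ) := integrable_exp_mul_of_mem_Icc (t := t) hX hb
  (continuous_mgf hint).log fun t => (mgf_pos_iff.2 (hint t)).ne'

theorem tendsto_cgf_atBot_of_nonneg [IsFiniteMeasure μ] (hX : AEMeasurable X μ)
    (h0 : ∀ᵐ ω ∂μ, 0 ≤ X ω) (hpos : 0 < μ.real {ω | X ω = 0}) :
    Tendsto (cgf X μ) atBot (𝓝 (Real.log (μ.real {ω | X ω = 0}))) :=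
  (tendsto_mgf_atBot_of_nonneg hX h0).log hpos.ne'

theorem exists_isMinOn_cgf_neg_add_div [IsProbabilityMeasure μ] {b s : ℝ} (hX : AEMeasurable X μ)
    (hb : ∀ᵐ ω ∂μ, X ω ∈ Icc 0 b) (hpos : 0 < μ.real {ω | X ω = 0}) (hs : 0 < s)
    (hs' : s < -Real.log (μ.real {ω | X ω = 0})) :
    ∃ x, 0 < x ∧ IsMinOn (fun x => (cgf X μ (-x) + s) / x) (Ioi 0) x :=
  exists_isMinOn_div_Ioi
    (((continuous_cgf_of_mem_Icc hX hb).comp continuous_neg).add continuous_const).continuousOn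
    (by simpa using hs)
    (((tendsto_cgf_atBot_of_nonneg hX (hb.mono fun _ hω => hω.1) hpos).comp
      tendsto_neg_atTop_atBot).add_const s)
    (by linarith)

end ProbabilityTheory

theorem inf_rate_attained_general
    {Ω : Type*} [MeasurableSpace Ω] (ν : Measure Ω) [IsProbabilityMeasure ν]
    (ℓ : Ω → ℝ) (hmeas : Measurable ℓ)
    (C : ℝ) (hbound : ∀ᵐ ω ∂ν, 0 ≤ ℓ ω ∧ ℓ ω ≤ C)
    (J : ℝ → ℝ)
    (hJ : ∀ lam : ℝ,
      J lam = Real.log (∫ ω, Real.exp (-lam * ℓ ω) ∂ν) + lam * ∫ ω, ℓ ω ∂ν)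
    (m : ℝ) (hm : m = essInf ℓ ν)
    (hmass : 0 < ν {ω | ℓ ω = m})
    (s : ℝ) (hs : 0 < s) (hs' : s < -Real.log ((ν {ω | ℓ ω = m}).toReal)) :
    ∃ lamstar : ℝ, 0 < lamstar ∧
      IsLeast {y : ℝ | ∃ lam : ℝ, 0 < lam ∧ y = (J lam + s) / lam}
        ((J lamstar + s) / lamstar) := by
  set Y : Ω → ℝ := fun ω => ℓ ω + -m
  have hY : ∀ᵐ ω ∂ν, Y ω ∈ Icc 0 (C + -m) := by
    have hbelow : ∀ᵐ ω ∂ν, essInf ℓ ν ≤ ℓ ω := ae_essInf_le ⟨0, hbound.mono fun _ hω => hω.1⟩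
    filter_upwards [hm ▸ hbelow, hbound] with ω hmω hω
    exact ⟨by linarith, by linarith⟩
  have hp : ν.real {ω | Y ω = 0} = (ν {ω | ℓ ω = m}).toReal := by
    simp only [Y, ← sub_eq_add_neg, sub_eq_zero, measureReal_def]
  have hJcgf : ∀ lam, J lam = cgf ℓ ν (-lam) + lam * ∫ ω, ℓ ω ∂ν := hJ
  have hobjective : ∀ lam ≠ 0,
      (J lam + s) / lam = (∫ ω, ℓ ω ∂ν - m) + (cgf Y ν (-lam) + s) / lam := by
    intro lam hlam
    have hmgf := integrable_exp_mul_of_mem_Icc (t := -lam) hmeas.aemeasurable hbound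
    rw [hJcgf, cgf_add_const _ (mgf_pos hmgf).ne']
    field_simp
    ring
  obtain ⟨lamstar, hpos, hmin⟩ := exists_isMinOn_cgf_neg_add_div
    (hmeas.aemeasurable.add_const _) hY (hp ▸ ENNReal.toReal_pos hmass.ne' (measure_ne_top _ _))
    hs (hp ▸ hs')
  refine ⟨lamstar, hpos, ⟨lamstar, hpos, rfl⟩, ?_⟩
  rintro _ ⟨lam, hlam, rfl⟩
  rw [hobjective lam hlam.ne', hobjective lamstar hpos.ne']
  exact add_le_add_right (isMinOn_iff.1 hmin lam hlam) _

/-- If `ν(ℓ = m) > 0` where `m = essInf ℓ`, and `0 < s < −log ν(ℓ = m)`, then the infimum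
over `λ > 0` of `(J(λ) + s)/λ` is attained at some finite `λ⋆ > 0`. -/
theorem inf_rate_attained
    {Ω : Type*} [MeasurableSpace Ω] (ν : Measure Ω) [IsProbabilityMeasure ν]
    (ℓ : Ω → ℝ) (hmeas : Measurable ℓ)
    (C : ℝ) (hC : 0 < C) (hbound : ∀ᵐ ω ∂ν, 0 ≤ ℓ ω ∧ ℓ ω ≤ C)
    (J : ℝ → ℝ)
    (hJ : ∀ lam : ℝ,
      J lam = Real.log (∫ ω, Real.exp (-lam * ℓ ω) ∂ν) + lam * ∫ ω, ℓ ω ∂ν)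
    (m : ℝ) (hm : m = essInf ℓ ν)
    (hmass : 0 < ν {ω | ℓ ω = m})
    (s : ℝ) (hs : 0 < s) (hs' : s < -Real.log ((ν {ω | ℓ ω = m}).toReal)) :
    ∃ lamstar : ℝ, 0 < lamstar ∧
      IsLeast {y : ℝ | ∃ lam : ℝ, 0 < lam ∧ y = (J lam + s) / lam}
        ((J lamstar + s) / lamstar) :=
  inf_rate_attained_general ν ℓ hmeas C hbound J hJ m hm hmass s hs hs'
end

section
/- Let ν be a probability measure on a measurable space Z, Θ a measurable space, and ℓ : Θ × Z → ℝ measurable with 0 ≤ ℓ(θ, z) ≤ C for all θ and ν-a.e. z. Define L(θ) = ∫ ℓ(θ, z) dν(z), J(θ, λ) = log ∫ exp(−λ·ℓ(θ, z)) dν(z) + λ·L(θ), and m(θ) = essInf_z ℓ(θ, z). Let π be a probability measure on Θ, n > 0, and let ρ be a probability measure on Θ with KL(ρ‖π) < ∞ and with θ ↦ L(θ) and θ ↦ m(θ) ρ-integrable. Then, as λ → ∞, the quantity ∫ L dρ + (1/(nλ))·KL(ρ‖π) + (1/λ)·∫ J(θ, λ) dρ(θ) converges to ∫ L dρ + ∫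 (L(θ) − m(θ)) dρ(θ); in particular, if m(θ) = 0 ρ-almost surely, the limit equals 2·∫ L dρ. -/
/-!
Writing `Λ_θ(t) = log ∫ exp (t ℓ(θ, z)) dν(z)` for the cumulant generating function of `ℓ(θ, ·)`,
one has `J(θ, λ)/λ = L(θ) - Λ_θ(-λ)/(-λ)`, so everything rests on Laplace's principle
`Λ(t)/t → essInf ℓ(θ, ·)` as `t → -∞`. From above, `ℓ ≥ essInf` a.e. gives `Λ(t) ≤ t · essInf`.
From below, for `d > essInf` the sublevel set `{ℓ ≤ d}` has positive mass `p`, and the Chernoff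
bound gives `Λ(t) ≥ log p + t d`. Since `Λ(t)/t ∈ [0, C]` for `t < 0`, dominated convergence
integrates the limit against `ρ`; the KL term is a constant divided by `nλ`.
-/

open MeasureTheory Filter Topology

/-- The Kullback–Leibler divergence `∫ log(dρ/dπ) dρ` (as a real number, meaningful when
`ρ ≪ π` and the integrand is `ρ`-integrable). -/
noncomputable def realKL {Θ : Type*} [MeasurableSpace Θ] (ρ π : Measure Θ) : ℝ :=
  ∫ θ, Real.log ((ρ.rnDeriv π θ).toReal) ∂ρ

namespace ProbabilityTheory

open Real

variable {Ω Θ : Type*} [MeasurableSpace Ω] [MeasurableSpace Θ] {μ : Measure Ω} {X : Ω → ℝ}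
  {a b t : ℝ}

lemma cgf_le_mul_of_nonpos [IsProbabilityMeasure μ]
    (h_int : Integrable (fun ω ↦ exp (t * X ω)) μ) (ha : ∀ᵐ ω ∂μ, a ≤ X ω) (ht : t ≤ 0) :
    cgf X μ t ≤ t * a := by
  have h : mgf X μ t ≤ exp (t * a) := by
    simpa [mgf_const] using mgf_anti_of_nonpos (X := fun _ ↦ a) ha ht (integrable_const _)
  exact (log_le_log (mgf_pos h_int) h).trans_eq (log_exp _)

lemma mul_le_cgf_of_nonpos [IsProbabilityMeasure μ]
    (h_int : Integrable (fun ω ↦ exp (t * X ω)) μ) (hb : ∀ᵐ ω ∂μ, X ω ≤ b) (ht : t ≤ 0) :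
    t * b ≤ cgf X μ t := by
  have h : exp (t * b) ≤ mgf X μ t := by
    simpa [mgf_const] using mgf_anti_of_nonpos (Y := fun _ ↦ b) hb ht h_int
  exact (log_exp _).symm.trans_le (log_le_log (exp_pos _) h)

lemma cgf_div_mem_Icc [IsProbabilityMeasure μ] (hX : AEMeasurable X μ)
    (hab : ∀ᵐ ω ∂μ, X ω ∈ Set.Icc a b) (ht : t < 0) : cgf X μ t / t ∈ Set.Icc a b :=
  have h_int := integrable_exp_mul_of_mem_Icc (t := t) hX hab
  ⟨(le_div_iff_of_neg' ht).2 (cgf_le_mul_of_nonpos h_int (hab.mono fun _ h ↦ h.1) ht.le),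
    (div_le_iff_of_neg' ht).2 (mul_le_cgf_of_nonpos h_int (hab.mono fun _ h ↦ h.2) ht.le)⟩

lemma log_measureReal_add_mul_le_cgf [IsFiniteMeasure μ]
    (h_int : Integrable (fun ω ↦ exp (t * X ω)) μ) (ht : t ≤ 0) {c : ℝ}
    (hc : 0 < μ.real {ω | X ω ≤ c}) : log (μ.real {ω | X ω ≤ c}) + t * c ≤ cgf X μ t := by
  have h := log_le_log hc (measure_le_le_exp_cgf c ht h_int)
  rw [log_exp] at h
  linarith

theorem tendsto_cgf_div_atBot [IsProbabilityMeasure μ] (hX : AEMeasurable X μ)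
    (hab : ∀ᵐ ω ∂μ, X ω ∈ Set.Icc a b) :
    Tendsto (fun t ↦ cgf X μ t / t) atBot (𝓝 (essInf X μ)) := by
  have h_int (t : ℝ) : Integrable (fun ω ↦ exp (t * X ω)) μ :=
    integrable_exp_mul_of_mem_Icc hX hab
  refine tendsto_order.2 ⟨fun c hc ↦ ?_, fun c hc ↦ ?_⟩
  · have hm : ∀ᵐ ω ∂μ, essInf X μ ≤ X ω := ae_essInf_le ⟨a, hab.mono fun _ h ↦ h.1⟩
    filter_upwards [eventually_lt_atBot 0] with t ht
    exact hc.trans_le ((le_div_iff_of_neg' ht).2 (cgf_le_mul_of_nonpos (h_int t) hm ht.le))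
  · obtain ⟨d, hmd, hdc⟩ := exists_between hc
    have hp : 0 < μ.real {ω | X ω ≤ d} := by
      have hcob : IsCoboundedUnder (· ≥ ·) (ae μ) X :=
        isCoboundedUnder_ge_of_eventually_le _ (hab.mono fun _ h ↦ h.2)
      have h := (frequently_lt_of_liminf_lt hcob hmd).mono fun _ h ↦ h.le
      exact ENNReal.toReal_pos (frequently_ae_iff.1 h) (measure_ne_top _ _)
    have hlog : Tendsto (fun t ↦ log (μ.real {ω | X ω ≤ d}) / t) atBot (𝓝 0) :=
      tendsto_const_nhds.div_atBot tendsto_id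
    filter_upwards [eventually_lt_atBot 0, hlog.eventually (gt_mem_nhds (sub_pos.2 hdc))]
      with t ht hsmall
    calc cgf X μ t / t ≤ (log (μ.real {ω | X ω ≤ d}) + t * d) / t :=
          div_le_div_of_nonpos_of_le ht.le (log_measureReal_add_mul_le_cgf (h_int t) ht.le hp)
      _ = log (μ.real {ω | X ω ≤ d}) / t + d := by rw [add_div, mul_div_cancel_left₀ _ ht.ne]
      _ < c := by linarith

lemma measurable_cgf_of_measurable_uncurry [SFinite μ] {ℓ : Θ → Ω → ℝ}
    (hℓ : Measurable (Function.uncurry ℓ)) (t : ℝ) : Measurable fun θ ↦ cgf (ℓ θ) μ t :=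
  ((measurable_exp.comp (hℓ.const_mul t)).stronglyMeasurable.integral_prod_right').measurable.log

section Family

variable [IsProbabilityMeasure μ] {ρ : Measure Θ} [IsFiniteMeasure ρ] {ℓ : Θ → Ω → ℝ}

lemma integrable_cgf_div (hℓ : Measurable (Function.uncurry ℓ))
    (hab : ∀ θ, ∀ᵐ ω ∂μ, ℓ θ ω ∈ Set.Icc a b) (ht : t < 0) :
    Integrable (fun θ ↦ cgf (ℓ θ) μ t / t) ρ := by
  refine .of_bound ((measurable_cgf_of_measurable_uncurry hℓ t).div_const t).aestronglyMeasurable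
    (max |a| |b|) (ae_of_all _ fun θ ↦ ?_)
  have h := cgf_div_mem_Icc (hℓ.comp measurable_prodMk_left).aemeasurable (hab θ) ht
  exact abs_le_max_abs_abs h.1 h.2

theorem tendsto_integral_cgf_div_atBot (hℓ : Measurable (Function.uncurry ℓ))
    (hab : ∀ θ, ∀ᵐ ω ∂μ, ℓ θ ω ∈ Set.Icc a b) :
    Tendsto (fun t ↦ ∫ θ, cgf (ℓ θ) μ t / t ∂ρ) atBot (𝓝 (∫ θ, essInf (ℓ θ) μ ∂ρ)) := by
  have hmeas (θ : Θ) : AEMeasurable (ℓ θ) μ := (hℓ.comp measurable_prodMk_left).aemeasurable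
  have hcgf (t : ℝ) : AEStronglyMeasurable (fun θ ↦ cgf (ℓ θ) μ t / t) ρ :=
    ((measurable_cgf_of_measurable_uncurry hℓ t).div_const t).aestronglyMeasurable
  refine tendsto_integral_filter_of_dominated_convergence (fun _ ↦ max |a| |b|) (.of_forall hcgf)
    ?_ (integrable_const _) (ae_of_all _ fun θ ↦ tendsto_cgf_div_atBot (hmeas θ) (hab θ))
  filter_upwards [eventually_lt_atBot 0] with t ht
  refine ae_of_all _ fun θ ↦ ?_
  have h := cgf_div_mem_Icc (hmeas θ) (hab θ) ht
  exact abs_le_max_abs_abs h.1 h.2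

end Family

end ProbabilityTheory

theorem objective_tendsto_atTop_general
    {Z Θ : Type*} [MeasurableSpace Z] [MeasurableSpace Θ]
    (ν : Measure Z) [IsProbabilityMeasure ν] (π : Measure Θ)
    (ℓ : Θ → Z → ℝ) (hmeas : Measurable (Function.uncurry ℓ))
    (C : ℝ) (hb : ∀ θ, ∀ᵐ z ∂ν, 0 ≤ ℓ θ z ∧ ℓ θ z ≤ C)
    (L : Θ → ℝ)
    (Jf : Θ → ℝ → ℝ)
    (hJ : ∀ θ lam, Jf θ lam =
      Real.log (∫ z, Real.exp (-lam * ℓ θ z) ∂ν) + lam * L θ)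
    (m : Θ → ℝ) (hm : ∀ θ, m θ = essInf (ℓ θ) ν)
    (n : ℝ)
    (ρ : Measure Θ) [IsProbabilityMeasure ρ]
    (hLint : Integrable L ρ) (hmint : Integrable m ρ) :
    Tendsto (fun lam =>
        (∫ θ, L θ ∂ρ) + (1 / (n * lam)) * realKL ρ π + (1 / lam) * ∫ θ, Jf θ lam ∂ρ)
      atTop (𝓝 ((∫ θ, L θ ∂ρ) + ∫ θ, (L θ - m θ) ∂ρ)) ∧
    ((∀ᵐ θ ∂ρ, m θ = 0) →
      Tendsto (fun lam =>
          (∫ θ, L θ ∂ρ) + (1 / (n * lam)) * realKL ρ π + (1 / lam) * ∫ θ, Jf θ lam ∂ρ)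
        atTop (𝓝 (2 * ∫ θ, L θ ∂ρ))) := by
  have hJ_div (θ : Θ) {lam : ℝ} (hlam : 0 < lam) :
      1 / lam * Jf θ lam = L θ - ProbabilityTheory.cgf (ℓ θ) ν (-lam) / (-lam) := by
    rw [hJ, ProbabilityTheory.cgf, ProbabilityTheory.mgf]
    field_simp
    ring
  have hJ_lim : Tendsto (fun lam ↦ 1 / lam * ∫ θ, Jf θ lam ∂ρ) atTop
      (𝓝 (∫ θ, L θ ∂ρ - ∫ θ, m θ ∂ρ)) := by
    simp only [hm]
    refine (((ProbabilityTheory.tendsto_integral_cgf_div_atBot hmeas hb).comp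
      tendsto_neg_atTop_atBot).const_sub _).congr' ?_
    filter_upwards [eventually_gt_atTop 0] with lam hlam
    rw [Function.comp_apply, ← integral_sub hLint
      (ProbabilityTheory.integrable_cgf_div hmeas hb (neg_neg_of_pos hlam)), ← integral_const_mul]
    exact integral_congr_ae (ae_of_all _ fun θ ↦ (hJ_div θ hlam).symm)
  have hKL_lim : Tendsto (fun lam : ℝ ↦ 1 / (n * lam) * realKL ρ π) atTop (𝓝 0) := by
    simpa [mul_inv] using (tendsto_inv_atTop_zero.mul_const n⁻¹).mul_const (realKL ρ π)
  have h := (tendsto_const_nhds (x := ∫ θ, L θ ∂ρ)).add hKL_lim |>.add hJ_lim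
  rw [add_zero, ← integral_sub hLint hmint] at h
  refine ⟨h, fun hm0 ↦ ?_⟩
  have hLm : ∫ θ, (L θ - m θ) ∂ρ = ∫ θ, L θ ∂ρ := by
    refine integral_congr_ae ?_
    filter_upwards [hm0] with θ hθ
    rw [hθ, sub_zero]
  rwa [hLm, ← two_mul] at h

/-- As `λ → ∞`, the PAC-Bayes objective
`∫ L dρ + (1/(nλ))·KL(ρ‖π) + (1/λ)·∫ J(θ,λ) dρ(θ)` converges to
`∫ L dρ + ∫ (L − m) dρ`; in particular, if `m = 0` `ρ`-a.s. the limit is `2·∫ L dρ`. -/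
theorem objective_tendsto_atTop
    {Z Θ : Type*} [MeasurableSpace Z] [MeasurableSpace Θ]
    (ν : Measure Z) [IsProbabilityMeasure ν] (π : Measure Θ) [IsProbabilityMeasure π]
    (ℓ : Θ → Z → ℝ) (hmeas : Measurable (Function.uncurry ℓ))
    (C : ℝ) (hC : 0 < C) (hb : ∀ θ, ∀ᵐ z ∂ν, 0 ≤ ℓ θ z ∧ ℓ θ z ≤ C)
    (L : Θ → ℝ) (hL : ∀ θ, L θ = ∫ z, ℓ θ z ∂ν)
    (Jf : Θ → ℝ → ℝ)
    (hJ : ∀ θ lam, Jf θ lam =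
      Real.log (∫ z, Real.exp (-lam * ℓ θ z) ∂ν) + lam * L θ)
    (m : Θ → ℝ) (hm : ∀ θ, m θ = essInf (ℓ θ) ν)
    (n : ℝ) (hn : 0 < n)
    (ρ : Measure Θ) [IsProbabilityMeasure ρ] (hac : ρ ≪ π)
    (hKL : Integrable (fun θ => Real.log ((ρ.rnDeriv π θ).toReal)) ρ)
    (hLint : Integrable L ρ) (hmint : Integrable m ρ) :
    Tendsto (fun lam =>
        (∫ θ, L θ ∂ρ) + (1 / (n * lam)) * realKL ρ π + (1 / lam) * ∫ θ, Jf θ lam ∂ρ)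
      atTop (𝓝 ((∫ θ, L θ ∂ρ) + ∫ θ, (L θ - m θ) ∂ρ)) ∧
    ((∀ᵐ θ ∂ρ, m θ = 0) →
      Tendsto (fun lam =>
          (∫ θ, L θ ∂ρ) + (1 / (n * lam)) * realKL ρ π + (1 / lam) * ∫ θ, Jf θ lam ∂ρ)
        atTop (𝓝 (2 * ∫ θ, L θ ∂ρ))) :=
  objective_tendsto_atTop_general ν π ℓ hmeas C hb L Jf hJ m hm n ρ hLint hmint
end
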